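/- arXiv:2403.14042 — 3 statements merged into one kernel-verified Lean document; each statement's English description precedes it below -/
import Mathlib

section
/- Let G be a closed subgroup of the orthogonal group O(d) and fix z ∈ ℝ^d. Then the map x ↦ ⟪[x],[z]⟫ is convex on ℝ^d, and for all x, y ∈ ℝ^d it satisfies |⟪[x],[z]⟫ − ⟪[y],[z]⟫| ≤ ‖z‖ · d([x],[y]); in particular it is ‖z‖-Lipschitz with respect to the Euclidean distance on ℝ^d. -/
open scoped RealInnerProductSpace

noncomputable section

/-- `d × d` real matrices. -/
abbrev Mat (d : ℕ) := Matrix (Fin d) (Fin d) ℝ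

/-- Euclidean space `ℝ^d`. -/
abbrev Euc (d : ℕ) := EuclideanSpace ℝ (Fin d)

/-- The orthogonal group `O(d)`. -/
abbrev OG (d : ℕ) := Matrix.orthogonalGroup (Fin d) ℝ

variable {d : ℕ}

/-- The action of an orthogonal matrix on Euclidean space. -/
def act (g : OG d) (x : Euc d) : Euc d := Matrix.toEuclideanLin (g : Mat d) x

lemma act_one (x : Euc d) : act (1 : OG d) x = x := by
  simp [act, Matrix.toEuclideanLin_apply, Matrix.one_mulVec]

lemma act_mul (a b : OG d) (x : Euc d) : act (a * b) x = act a (act b x) := by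
  simp [act, Matrix.toEuclideanLin_apply, Matrix.mulVec_mulVec]

lemma act_inv_of_fix {g : OG d} {x : Euc d} (h : act g x = x) : act g⁻¹ x = x := by
  conv_lhs => rw [← h, ← act_mul, inv_mul_cancel, act_one]

/-- The set of matrices underlying a subgroup `G ≤ O(d)`. -/
def matSet (G : Subgroup (OG d)) : Set (Mat d) := {m | ∃ g ∈ G, (g : Mat d) = m}

/-- The orbit `[x] = G ⬝ x`. -/
def orb (G : Subgroup (OG d)) (x : Euc d) : Set (Euc d) := {y | ∃ g ∈ G, act g x = y}

/-- The quotient metric `d([x],[y]) = inf_{g ∈ G} ‖g x − y‖`. -/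
def qdist (G : Subgroup (OG d)) (x y : Euc d) : ℝ := ⨅ g : G, ‖act (g : OG d) x - y‖

/-- The max filtering map `⟪[x],[z]⟫ = sup_{g ∈ G} ⟨g x, z⟩`. -/
def maxFilt (G : Subgroup (OG d)) (x z : Euc d) : ℝ := ⨆ g : G, ⟪act (g : OG d) x, z⟫

/-- The stabilizer `G_x = {g ∈ G : g x = x}` as a subgroup. -/
def stab (G : Subgroup (OG d)) (x : Euc d) : Subgroup (OG d) where
  carrier := {g | g ∈ G ∧ act g x = x}
  one_mem' := ⟨G.one_mem, act_one x⟩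
  mul_mem' := fun ha hb => ⟨G.mul_mem ha.1 hb.1, by rw [act_mul, hb.2, ha.2]⟩
  inv_mem' := fun ha => ⟨G.inv_mem ha.1, act_inv_of_fix ha.2⟩

/-- The Lie algebra `𝔤` of `G`: matrices whose one-parameter exponential subgroup lies in `G`. -/
def lieAlg (G : Subgroup (OG d)) : Set (Mat d) :=
  {A | ∀ t : ℝ, ∃ g ∈ G, (g : Mat d) = NormedSpace.exp (t • A)}

/-- The tangent space `T_x = 𝔤 ⬝ x` to the orbit at `x`. -/
def Tsp (G : Subgroup (OG d)) (x : Euc d) : Submodule ℝ (Euc d) :=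
  Submodule.span ℝ {v | ∃ A ∈ lieAlg G, Matrix.toEuclideanLin A x = v}

/-- The normal space `N_x = T_x^⊥`. -/
def Nsp (G : Subgroup (OG d)) (x : Euc d) : Submodule ℝ (Euc d) := (Tsp G x)ᗮ

/-- The maximal orbit dimension `max_y dim T_y`. -/
def orbDimMax (G : Subgroup (OG d)) : ℕ := ⨆ y : Euc d, Module.finrank ℝ (Tsp G y)

/-- The set of regular points `R(G)`. -/
def RG (G : Subgroup (OG d)) : Set (Euc d) :=
  {x | Module.finrank ℝ (Tsp G x) = orbDimMax G}

/-- The set of principal points `P(G)`. -/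
def PG (G : Subgroup (OG d)) : Set (Euc d) :=
  {x | ∀ z : Euc d, stab G z ≤ stab G x → stab G z = stab G x}

/-- The regular Voronoi complexity `χ(G)`. -/
def chi (G : Subgroup (OG d)) : ℕ :=
  sSup {k : ℕ | ∃ x ∈ RG G, ∃ p ∈ RG G,
    stab G p ≤ stab G x ∧ k = (stab G p).relIndex (stab G x)}

/-- The set of maximizers `{p ∈ [x] : ⟨p,z⟩ = ⟪[x],[z]⟫}`. -/
def argmaxSet (G : Subgroup (OG d)) (x z : Euc d) : Set (Euc d) :=
  {p | p ∈ orb G x ∧ ⟪p, z⟫ = maxFilt G x z}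

/-- The unique Voronoi cell `U_x`. -/
def Ucell (G : Subgroup (OG d)) (x : Euc d) : Set (Euc d) :=
  {z | argmaxSet G x z = {x}}

/-- The open Voronoi cell `V_x`, the relative (intrinsic) interior of `U_x`. -/
def Vcell (G : Subgroup (OG d)) (x : Euc d) : Set (Euc d) :=
  intrinsicInterior ℝ (Ucell G x)

/-- The open Voronoi diagram `Q_x`. -/
def Qdiag (G : Subgroup (OG d)) (x : Euc d) : Set (Euc d) :=
  ⋃ p ∈ orb G x, Vcell G p

/-- Membership `x ∈ V_z^{loc}` in the local open Voronoi cell. -/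
def VlocMem (G : Subgroup (OG d)) (z x : Euc d) : Prop :=
  ∃ U V : Set (Euc d), IsOpen U ∧ z ∈ U ∧ IsOpen V ∧ x ∈ V ∧
    ∀ q ∈ V, ∃ p₀ : Euc d,
      {p | p ∈ orb G z ∩ U ∧
        ⟪p, q⟫ = ⨆ p' : (orb G z ∩ U : Set (Euc d)), ⟪(p' : Euc d), q⟫} = {p₀}

/-- The max filter bank `Φ(x) = (⟪[x],[z_i]⟫)_{i=1}^n`. -/
def filterBank (G : Subgroup (OG d)) {n : ℕ} (z : Fin n → Euc d) (x : Euc d) :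
    EuclideanSpace ℝ (Fin n) :=
  (WithLp.equiv 2 (Fin n → ℝ)).symm fun i => maxFilt G x (z i)

/-- `Φ` is locally lower Lipschitz at `x` (with respect to the quotient metric). -/
def LocLowerLip (G : Subgroup (OG d)) {n : ℕ}
    (Φ : Euc d → EuclideanSpace ℝ (Fin n)) (x : Euc d) : Prop :=
  ∃ α > (0 : ℝ), ∃ ε > (0 : ℝ), ∀ x' y' : Euc d,
    qdist G x' x < ε → qdist G y' x < ε → α * qdist G x' y' ≤ ‖Φ x' - Φ y'‖

/-- `Φ` is bilipschitz with respect to the quotient metric. -/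
def BiLip (G : Subgroup (OG d)) {n : ℕ}
    (Φ : Euc d → EuclideanSpace ℝ (Fin n)) : Prop :=
  ∃ α > (0 : ℝ), ∃ β > (0 : ℝ), ∀ x y : Euc d,
    α * qdist G x y ≤ ‖Φ x - Φ y‖ ∧ ‖Φ x - Φ y‖ ≤ β * qdist G x y


open scoped Matrix in
lemma inner_act_act' (g : OG d) (x y : Euc d) : ⟪act g x, act g y⟫ = ⟪x, y⟫ := by
  have h1 : Matrix.toEuclideanLin ((g : Mat d)ᴴ) = LinearMap.adjoint (Matrix.toEuclideanLin (g : Mat d)) :=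
    Matrix.toEuclideanLin_conjTranspose_eq_adjoint _
  have h2 : ⟪act g x, act g y⟫ = ⟪LinearMap.adjoint (Matrix.toEuclideanLin (g : Mat d)) (act g x), y⟫ := by
    rw [LinearMap.adjoint_inner_left]; rfl
  rw [h2, ← h1]
  have h3 : (g : Mat d)ᴴ * (g : Mat d) = 1 := g.prop.1
  show ⟪Matrix.toEuclideanLin ((g : Mat d)ᴴ) (Matrix.toEuclideanLin (g : Mat d) x), y⟫ = _
  have h4 : (g : Mat d)ᵀ * (g : Mat d) = 1 := by simpa using h3
  simp [Matrix.toEuclideanLin_apply, Matrix.mulVec_mulVec, h4, Matrix.one_mulVec]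

lemma norm_act' (g : OG d) (x : Euc d) : ‖act g x‖ = ‖x‖ := by
  have := inner_act_act' g x x
  rw [real_inner_self_eq_norm_sq, real_inner_self_eq_norm_sq] at this
  nlinarith [norm_nonneg (act g x), norm_nonneg x]

lemma act_add' (g : OG d) (x y : Euc d) : act g (x + y) = act g x + act g y := by
  simp [act]

lemma act_smul' (g : OG d) (a : ℝ) (x : Euc d) : act g (a • x) = a • act g x := by
  simp [act]

lemma act_sub' (g : OG d) (x y : Euc d) : act g (x - y) = act g x - act g y := by
  simp [act]

lemma maxFilt_bdd (G : Subgroup (OG d)) (x z : Euc d) :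
    BddAbove (Set.range fun g : G => ⟪act (g : OG d) x, z⟫) := by
  refine ⟨‖x‖ * ‖z‖, ?_⟩
  rintro r ⟨g, rfl⟩
  calc ⟪act (g : OG d) x, z⟫ ≤ ‖act (g : OG d) x‖ * ‖z‖ := real_inner_le_norm _ _
    _ = ‖x‖ * ‖z‖ := by rw [norm_act']

lemma inner_le_maxFilt (G : Subgroup (OG d)) (x z : Euc d) (g : G) :
    ⟪act (g : OG d) x, z⟫ ≤ maxFilt G x z :=
  le_ciSup (maxFilt_bdd G x z) g

lemma maxFilt_le (G : Subgroup (OG d)) (x z : Euc d) {c : ℝ}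
    (h : ∀ g : G, ⟪act (g : OG d) x, z⟫ ≤ c) : maxFilt G x z ≤ c :=
  ciSup_le h

lemma key_lip (G : Subgroup (OG d)) (z x y : Euc d) (h : G) :
    |maxFilt G x z - maxFilt G y z| ≤ ‖z‖ * ‖act (h : OG d) x - y‖ := by
  rw [abs_sub_le_iff]
  constructor
  · rw [sub_le_iff_le_add]
    refine maxFilt_le G x z fun g => ?_
    have hk : act ((g * h⁻¹ : G) : OG d) (act (h : OG d) x) = act (g : OG d) x := by
      rw [← act_mul]; norm_num
    calc ⟪act (g : OG d) x, z⟫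
        = ⟪act ((g * h⁻¹ : G) : OG d) (act (h : OG d) x - y), z⟫
          + ⟪act ((g * h⁻¹ : G) : OG d) y, z⟫ := by
          rw [act_sub', ← inner_add_left, sub_add_cancel, hk]
      _ ≤ ‖act ((g * h⁻¹ : G) : OG d) (act (h : OG d) x - y)‖ * ‖z‖ + maxFilt G y z := by
          gcongr
          · exact real_inner_le_norm _ _
          · exact inner_le_maxFilt G y z (g * h⁻¹)
      _ = ‖z‖ * ‖act (h : OG d) x - y‖ + maxFilt G y z := by
          rw [norm_act', mul_comm]
  · rw [sub_le_iff_le_add]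
    refine maxFilt_le G y z fun g => ?_
    calc ⟪act (g : OG d) y, z⟫
        = ⟪act (g : OG d) (y - act (h : OG d) x), z⟫
          + ⟪act ((g * h : G) : OG d) x, z⟫ := by
          rw [act_sub', ← inner_add_left]
          congr 1
          rw [show ((g * h : G) : OG d) = (g : OG d) * (h : OG d) from rfl, act_mul]
          abel
      _ ≤ ‖act (g : OG d) (y - act (h : OG d) x)‖ * ‖z‖ + maxFilt G x z := by
          gcongr
          · exact real_inner_le_norm _ _
          · exact inner_le_maxFilt G x z (g * h)
      _ = ‖z‖ * ‖act (h : OG d) x - y‖ + maxFilt G x z := by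
          rw [norm_act', norm_sub_rev, mul_comm]

lemma maxFilt_lip (G : Subgroup (OG d)) (z x y : Euc d) :
    |maxFilt G x z - maxFilt G y z| ≤ ‖z‖ * qdist G x y := by
  rw [qdist, Real.mul_iInf_of_nonneg (norm_nonneg z)]
  exact le_ciInf fun h => key_lip G z x y h

/-- The max filtering map `x ↦ ⟪[x],[z]⟫` is convex, `‖z‖`-Lipschitz with
respect to the quotient metric, and hence `‖z‖`-Lipschitz for the Euclidean distance. -/
theorem maxFilt_convex_and_lipschitz
    (d : ℕ) (G : Subgroup (OG d)) (hGclosed : IsClosed (matSet G)) (z : Euc d) :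
    ConvexOn ℝ Set.univ (fun x => maxFilt G x z) ∧
    (∀ x y : Euc d, |maxFilt G x z - maxFilt G y z| ≤ ‖z‖ * qdist G x y) ∧
    LipschitzWith ‖z‖₊ (fun x => maxFilt G x z) := by
  constructor
  · refine ⟨convex_univ, fun x _ y _ a b ha hb hab => ?_⟩
    refine maxFilt_le G _ z fun g => ?_
    have : act (g : OG d) (a • x + b • y) = a • act (g : OG d) x + b • act (g : OG d) y := by
      rw [act_add', act_smul', act_smul']
    rw [this, inner_add_left, real_inner_smul_left, real_inner_smul_left]
    simp only [smul_eq_mul]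
    gcongr
    · exact inner_le_maxFilt G x z g
    · exact inner_le_maxFilt G y z g
  refine ⟨fun x y => maxFilt_lip G z x y, ?_⟩
  refine LipschitzWith.of_dist_le_mul fun x y => ?_
  have h1 : |maxFilt G x z - maxFilt G y z| ≤ ‖z‖ * qdist G x y := maxFilt_lip G z x y
  have h2 : qdist G x y ≤ dist x y := by
    have := ciInf_le (f := fun g : G => ‖act (g : OG d) x - y‖)
      ⟨0, fun r ⟨g, hg⟩ => hg ▸ norm_nonneg _⟩ (1 : G)
    rw [qdist, dist_eq_norm]
    simpa [act_one] using this
  calc dist (maxFilt G x z) (maxFilt G y z) = |maxFilt G x z - maxFilt G y z| := Real.dist_eq _ _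
    _ ≤ ‖z‖ * qdist G x y := h1
    _ ≤ ‖z‖₊ * dist x y := by
        rw [coe_nnnorm]
        exact mul_le_mul_of_nonneg_left h2 (norm_nonneg z)


end
end

section
/- Let G be a closed subgroup of the orthogonal group O(d). For all x, z ∈ ℝ^d, one has z ∈ U_x if and only if {g ∈ G : ⟨g z, x⟩ = ⟪[z],[x]⟫} = G_x. -/
open scoped RealInnerProductSpace

noncomputable section

variable {d : ℕ}

lemma inner_act (g : OG d) (u v : Euc d) : ⟪act g u, v⟫ = ⟪u, act g⁻¹ v⟫ := by
  simp only [act, Matrix.UnitaryGroup.inv_val, Matrix.star_eq_conjTranspose]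
  rw [Matrix.toEuclideanLin_conjTranspose_eq_adjoint, LinearMap.adjoint_inner_right]

lemma inner_act_inv (g : OG d) (u v : Euc d) : ⟪act g⁻¹ u, v⟫ = ⟪u, act g v⟫ := by
  rw [inner_act, inv_inv]

lemma maxFilt_comm (G : Subgroup (OG d)) (x z : Euc d) :
    maxFilt G z x = maxFilt G x z := by
  unfold maxFilt iSup
  congr 1
  ext r
  simp only [Set.mem_range]
  constructor
  · rintro ⟨g, rfl⟩
    exact ⟨g⁻¹, by rw [Subgroup.coe_inv, inner_act_inv, real_inner_comm]⟩
  · rintro ⟨g, rfl⟩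
    exact ⟨g⁻¹, by rw [Subgroup.coe_inv, inner_act_inv, real_inner_comm]⟩

/-- `z ∈ U_x` iff `{g ∈ G : ⟨g z, x⟩ = ⟪[z],[x]⟫} = G_x`. -/
theorem mem_Ucell_iff_stabilizer
    (d : ℕ) (G : Subgroup (OG d)) (hGclosed : IsClosed (matSet G)) (x z : Euc d) :
    z ∈ Ucell G x ↔
      {g : OG d | g ∈ G ∧ ⟪act g z, x⟫ = maxFilt G z x} = (stab G x : Set (OG d)) := by
  constructor
  · intro hz
    have hx : x ∈ argmaxSet G x z := by rw [Ucell, Set.mem_setOf_eq] at hz; rw [hz]; rfl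
    ext g
    constructor
    · rintro ⟨hgG, hg⟩
      have hmem : act g⁻¹ x ∈ argmaxSet G x z := by
        refine ⟨⟨g⁻¹, G.inv_mem hgG, rfl⟩, ?_⟩
        rw [inner_act_inv, real_inner_comm, hg, maxFilt_comm]
      rw [Ucell, Set.mem_setOf_eq] at hz
      rw [hz, Set.mem_singleton_iff] at hmem
      have : act g x = x := by
        have := act_inv_of_fix (g := g⁻¹) hmem
        rwa [inv_inv] at this
      exact ⟨hgG, this⟩
    · rintro ⟨hgG, hgx⟩
      refine ⟨hgG, ?_⟩
      rw [inner_act, act_inv_of_fix hgx, real_inner_comm, hx.2, maxFilt_comm]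
  · intro hset
    have h1 : (1 : OG d) ∈ {g : OG d | g ∈ G ∧ ⟪act g z, x⟫ = maxFilt G z x} := by
      rw [hset]; exact (stab G x).one_mem
    have hxmax : ⟪x, z⟫ = maxFilt G x z := by
      rw [real_inner_comm, ← maxFilt_comm, ← h1.2, act_one]
    rw [Ucell, Set.mem_setOf_eq]
    ext p
    constructor
    · rintro ⟨⟨g, hgG, rfl⟩, hp⟩
      have hginv : g⁻¹ ∈ {g : OG d | g ∈ G ∧ ⟪act g z, x⟫ = maxFilt G z x} := by
        refine ⟨G.inv_mem hgG, ?_⟩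
        rw [inner_act_inv, real_inner_comm, hp, maxFilt_comm]
      rw [hset] at hginv
      have : act g x = x := by
        have := act_inv_of_fix (g := g⁻¹) hginv.2
        rwa [inv_inv] at this
      exact this
    · intro hp
      rw [Set.mem_singleton_iff] at hp
      rw [hp]
      exact ⟨⟨1, G.one_mem, act_one x⟩, hxmax⟩

end
end

section
/- Let X be a metric space, let f : ℝ → X, and let a ≤ i_0 ≤ i_1 ≤ b be real numbers. If the length of f over [a,b] (its total variation eVariationOn f on the closed interval [a,b]) equals the distance dist(f(a), f(b)), then the length of f over [i_0, i_1] equals dist(f(i_0), f(i_1)); that is, a curve that minimizes length between its endpoints is minimizing over every subinterval. -/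
/-- A curve whose length (total variation) over `[a,b]` equals the distance
between its endpoints is length-minimizing over every subinterval `[i₀,i₁] ⊆ [a,b]`. -/
theorem eVariationOn_subinterval_of_minimal {X : Type*} [MetricSpace X] (f : ℝ → X)
    (a i₀ i₁ b : ℝ) (h₁ : a ≤ i₀) (h₂ : i₀ ≤ i₁) (h₃ : i₁ ≤ b)
    (h : eVariationOn f (Set.Icc a b) = edist (f a) (f b)) :
    eVariationOn f (Set.Icc i₀ i₁) = edist (f i₀) (f i₁) := by
  set A := eVariationOn f (Set.Icc a i₀) with hA
  set B := eVariationOn f (Set.Icc i₀ i₁) with hB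
  set C := eVariationOn f (Set.Icc i₁ b) with hC
  have hsplit1 : eVariationOn f (Set.univ ∩ Set.Icc a i₁) +
      eVariationOn f (Set.univ ∩ Set.Icc i₁ b) =
      eVariationOn f (Set.univ ∩ Set.Icc a b) :=
    eVariationOn.Icc_add_Icc f (h₁.trans h₂) h₃ (Set.mem_univ _)
  have hsplit2 : eVariationOn f (Set.univ ∩ Set.Icc a i₀) +
      eVariationOn f (Set.univ ∩ Set.Icc i₀ i₁) =
      eVariationOn f (Set.univ ∩ Set.Icc a i₁) :=
    eVariationOn.Icc_add_Icc f h₁ h₂ (Set.mem_univ _)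
  simp only [Set.univ_inter] at hsplit1 hsplit2
  have hsum : A + B + C = edist (f a) (f b) := by
    rw [← h, ← hsplit1, ← hsplit2]
  have eA : edist (f a) (f i₀) ≤ A :=
    eVariationOn.edist_le f ⟨le_refl a, h₁⟩ ⟨h₁, le_refl i₀⟩
  have eB : edist (f i₀) (f i₁) ≤ B :=
    eVariationOn.edist_le f ⟨le_refl i₀, h₂⟩ ⟨h₂, le_refl i₁⟩
  have eC : edist (f i₁) (f b) ≤ C :=
    eVariationOn.edist_le f ⟨le_refl i₁, h₃⟩ ⟨h₃, le_refl b⟩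
  have htri : A + B + C ≤ edist (f a) (f i₀) + edist (f i₀) (f i₁) + edist (f i₁) (f b) := by
    rw [hsum]
    exact (edist_triangle _ (f i₁) _).trans
      (add_le_add_left (edist_triangle _ (f i₀) _) _)
  have hAlt : A ≠ ⊤ := by
    intro hAt
    rw [hAt] at hsum
    simp at hsum
    exact (edist_lt_top (f a) (f b)).ne hsum.symm
  have hClt : C ≠ ⊤ := by
    intro hCt
    rw [hCt] at hsum
    simp at hsum
    exact (edist_lt_top (f a) (f b)).ne hsum.symm
  -- from htri and eA, eC deduce B ≤ edist (f i₀) (f i₁)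
  have hBle : B ≤ edist (f i₀) (f i₁) := by
    by_contra hlt
    push_neg at hlt
    have : A + B + C < A + B + C :=
      lt_of_le_of_lt htri (by
        calc edist (f a) (f i₀) + edist (f i₀) (f i₁) + edist (f i₁) (f b)
            ≤ A + edist (f i₀) (f i₁) + C := add_le_add (add_le_add eA le_rfl) eC
          _ < A + B + C := by
              exact ENNReal.add_lt_add_of_lt_of_le hClt
                (ENNReal.add_lt_add_of_le_of_lt hAlt le_rfl hlt) le_rfl)
    exact absurd this (lt_irrefl _)
  exact le_antisymm hBle eB
end
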